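/- arXiv:2209.13694 — 7 statements merged into one kernel-verified Lean document; each statement's English description precedes it below -/
import Mathlib

section
/- Let d, T be positive integers, λ > 0, and x_1, …, x_T ∈ ℝ^d. With V_0 = λ I_d and V_t = λ I_d + ∑_{s=1}^t x_s x_sᵀ, one has det(V_T) = λ^d · ∏_{t=1}^T (1 + ‖x_t‖²_{V_{t-1}^{-1}}). -/
/-!
Since `V_t = V_{t-1} + x_t x_tᵀ` with `V_{t-1}` invertible, the matrix determinant lemma gives
`det V_t = det V_{t-1} · (1 + x_tᵀ V_{t-1}⁻¹ x_t)`; the product telescopes down to `det V_0 = λ^d`,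
and positive definiteness of `V_{t-1}⁻¹` identifies `x_tᵀ V_{t-1}⁻¹ x_t` with `‖x_t‖²_{V_{t-1}⁻¹}`.
-/

open Matrix Finset

/-- `‖z‖_W := √(zᵀ W z)` for a `d × d` real matrix `W`. -/
noncomputable def matNorm {d : ℕ} (W : Matrix (Fin d) (Fin d) ℝ) (z : Fin d → ℝ) : ℝ :=
  Real.sqrt (z ⬝ᵥ (W *ᵥ z))

lemma sq_matNorm_of_posSemidef {d : ℕ} {W : Matrix (Fin d) (Fin d) ℝ} (hW : W.PosSemidef)
    (z : Fin d → ℝ) : matNorm W z ^ 2 = z ⬝ᵥ (W *ᵥ z) :=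
  Real.sq_sqrt (by simpa using hW.dotProduct_mulVec_nonneg z)

namespace Matrix

variable {n K : Type*} [Fintype n] [DecidableEq n] [Field K]

theorem det_add_vecMulVec {A : Matrix n n K} (hA : IsUnit A.det) (u v : n → K) :
    (A + vecMulVec u v).det = A.det * (1 + v ⬝ᵥ (A⁻¹ *ᵥ u)) := by
  rw [vecMulVec_eq Unit, det_add_replicateCol_mul_replicateRow hA, Matrix.mul_assoc,
    ← replicateCol_mulVec, det_unique (1 + _ : Matrix Unit Unit K), add_apply, one_apply_eq,
    replicateRow_mul_replicateCol_apply]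

theorem det_eq_det_mul_prod_of_succ_eq_add_vecMulVec {V : ℕ → Matrix n n K} {u v : ℕ → n → K}
    (hV : ∀ t, V (t + 1) = V t + vecMulVec (u (t + 1)) (v (t + 1)))
    (hunit : ∀ t, IsUnit (V t).det) (T : ℕ) :
    (V T).det = (V 0).det * ∏ t ∈ Icc 1 T, (1 + v t ⬝ᵥ ((V (t - 1))⁻¹ *ᵥ u t)) := by
  induction T with
  | zero => simp
  | succ T ih =>
    rw [prod_Icc_succ_top (by omega), hV, det_add_vecMulVec (hunit T), ih, Nat.add_sub_cancel]
    ring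

theorem posDef_smul_one_add_sum_vecMulVec_self {ι : Type*} {lam : ℝ} (hlam : 0 < lam)
    (s : Finset ι) (x : ι → n → ℝ) :
    (lam • (1 : Matrix n n ℝ) + ∑ i ∈ s, vecMulVec (x i) (x i)).PosDef :=
  (PosDef.one.smul hlam).add_posSemidef
    (posSemidef_sum s fun i _ => by simpa using posSemidef_vecMulVec_self_star (x i))

end Matrix

theorem det_product_formula_general (d T : ℕ)
    (lam : ℝ) (hlam : 0 < lam) (x : ℕ → Fin d → ℝ)
    (V : ℕ → Matrix (Fin d) (Fin d) ℝ)
    (hV : ∀ t, V t = lam • (1 : Matrix (Fin d) (Fin d) ℝ) +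
      ∑ s ∈ Finset.Icc 1 t, vecMulVec (x s) (x s)) :
    (V T).det = lam ^ d * ∏ t ∈ Finset.Icc 1 T, (1 + (matNorm ((V (t - 1))⁻¹) (x t)) ^ 2) := by
  have hpd : ∀ t, (V t).PosDef := fun t =>
    hV t ▸ posDef_smul_one_add_sum_vecMulVec_self hlam _ x
  have hstep : ∀ t, V (t + 1) = V t + vecMulVec (x (t + 1)) (x (t + 1)) := fun t => by
    rw [hV, hV, sum_Icc_succ_top (by omega), add_assoc]
  have hunit : ∀ t, IsUnit (V t).det := fun t => (isUnit_iff_isUnit_det _).1 (hpd t).isUnit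
  have hV0 : (V 0).det = lam ^ d := by simp [hV 0]
  rw [det_eq_det_mul_prod_of_succ_eq_add_vecMulVec hstep hunit T, hV0]
  congr 1
  refine prod_congr rfl fun t _ => ?_
  rw [sq_matNorm_of_posSemidef (hpd _).inv.posSemidef]

/-- with `V_0 = λ I` and `V_t = λ I + ∑_{s=1}^t x_s x_sᵀ`,
`det(V_T) = λ^d · ∏_{t=1}^T (1 + ‖x_t‖²_{V_{t-1}⁻¹})`. -/
theorem det_product_formula (d T : ℕ) (hd : 0 < d) (hT : 0 < T)
    (lam : ℝ) (hlam : 0 < lam) (x : ℕ → Fin d → ℝ)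
    (V : ℕ → Matrix (Fin d) (Fin d) ℝ)
    (hV : ∀ t, V t = lam • (1 : Matrix (Fin d) (Fin d) ℝ) +
      ∑ s ∈ Finset.Icc 1 t, vecMulVec (x s) (x s)) :
    (V T).det = lam ^ d * ∏ t ∈ Finset.Icc 1 T, (1 + (matNorm ((V (t - 1))⁻¹) (x t)) ^ 2) :=
  det_product_formula_general d T lam hlam x V hV
end

section
/- Let d, T be positive integers, λ > 0, and x_1, …, x_T ∈ ℝ^d with ‖x_t‖_2 ≤ 1 for every t. With V_T = λ I_d + ∑_{t=1}^T x_t x_tᵀ, one has det(V_T) ≤ ((dλ + T)/d)^d, and consequently log( det(V_T) / det(λ I_d) ) ≤ d · log(1 + T/(λ d)). -/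
open Matrix Finset

/-!
The determinant of a positive semidefinite matrix is the product of its eigenvalues and its trace
their sum, so AM-GM gives `det A ≤ (tr A / d) ^ d`. For `V_T` the trace is `d λ + ∑ ‖x_t‖² ≤ d λ + T`;
the logarithmic bound follows by dividing by `det (λ I) = λ ^ d`.
-/

theorem Real.prod_le_pow_sum_div_card {ι : Type*} (s : Finset ι) (z : ι → ℝ)
    (hz : ∀ i ∈ s, 0 ≤ z i) : ∏ i ∈ s, z i ≤ ((∑ i ∈ s, z i) / #s) ^ #s := by
  obtain rfl | hs := s.eq_empty_or_nonempty
  · simp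
  have hcard : (0 : ℝ) < #s := by exact_mod_cast hs.card_pos
  have amgm := Real.geom_mean_le_arith_mean_weighted s (fun _ ↦ (#s : ℝ)⁻¹) z
    (fun _ _ ↦ by positivity) (by simp [hcard.ne']) hz
  rw [← Finset.mul_sum, inv_mul_eq_div] at amgm
  calc ∏ i ∈ s, z i = (∏ i ∈ s, z i ^ (#s : ℝ)⁻¹) ^ #s := by
        rw [← Finset.prod_pow]
        refine Finset.prod_congr rfl fun i hi ↦ ?_
        rw [← Real.rpow_natCast, ← Real.rpow_mul (hz i hi), inv_mul_cancel₀ hcard.ne',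
          Real.rpow_one]
    _ ≤ ((∑ i ∈ s, z i) / #s) ^ #s :=
        pow_le_pow_left₀ (Finset.prod_nonneg fun i hi ↦ Real.rpow_nonneg (hz i hi) _) amgm _

theorem Matrix.PosSemidef.det_le_trace_div_card_pow {n : Type*} [Fintype n] [DecidableEq n]
    {A : Matrix n n ℝ} (hA : A.PosSemidef) :
    A.det ≤ (A.trace / Fintype.card n) ^ Fintype.card n := by
  have hdet : A.det = ∏ i, hA.isHermitian.eigenvalues i := by
    simpa using hA.isHermitian.det_eq_prod_eigenvalues
  have htrace : A.trace = ∑ i, hA.isHermitian.eigenvalues i := by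
    simpa using hA.isHermitian.trace_eq_sum_eigenvalues
  rw [hdet, htrace]
  exact Real.prod_le_pow_sum_div_card _ _ fun i _ ↦ hA.eigenvalues_nonneg i

section Gram

variable {ι n : Type*} [Fintype n] [DecidableEq n] (s : Finset ι) (x : ι → n → ℝ)

theorem Matrix.posDef_smul_one_add_sum_vecMulVec {lam : ℝ} (hlam : 0 < lam) :
    (lam • (1 : Matrix n n ℝ) + ∑ i ∈ s, vecMulVec (x i) (x i)).PosDef := by
  rw [smul_one_eq_diagonal]
  refine (PosDef.diagonal fun _ ↦ hlam).add_posSemidef ?_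
  exact Finset.sum_induction _ _ (fun _ _ ↦ PosSemidef.add) PosSemidef.zero
    fun i _ ↦ posSemidef_vecMulVec_self_star (x i)

theorem Matrix.trace_smul_one_add_sum_vecMulVec_le (lam : ℝ) (hx : ∀ i ∈ s, ∑ j, x i j ^ 2 ≤ 1) :
    (lam • (1 : Matrix n n ℝ) + ∑ i ∈ s, vecMulVec (x i) (x i)).trace ≤
      Fintype.card n * lam + #s := by
  rw [trace_add, trace_smul, trace_one, trace_sum, smul_eq_mul, mul_comm]
  gcongr
  calc ∑ i ∈ s, (vecMulVec (x i) (x i)).trace = ∑ i ∈ s, ∑ j, x i j ^ 2 := by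
        simp [trace_vecMulVec, dotProduct, sq]
    _ ≤ ∑ _i ∈ s, (1 : ℝ) := Finset.sum_le_sum hx
    _ = #s := by simp

end Gram

theorem Real.log_div_pow_le_mul_log {d : ℕ} {a lam c : ℝ} (ha : 0 < a) (hlam : 0 < lam)
    (h : a ≤ ((d * lam + c) / d) ^ d) :
    Real.log (a / lam ^ d) ≤ d * Real.log (1 + c / (lam * d)) := by
  have hpow : ((d * lam + c) / d) ^ d / lam ^ d = (1 + c / (lam * d)) ^ d := by
    obtain rfl | hd := eq_or_ne d 0
    · simp
    rw [← div_pow]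
    congr 1
    field_simp
  calc Real.log (a / lam ^ d) ≤ Real.log (((d * lam + c) / d) ^ d / lam ^ d) := by
        gcongr
    _ = d * Real.log (1 + c / (lam * d)) := by rw [hpow, Real.log_pow]

theorem det_upper_bound_general (d T : ℕ)
    (lam : ℝ) (hlam : 0 < lam) (x : ℕ → Fin d → ℝ)
    (hx : ∀ t ∈ Finset.Icc 1 T, Real.sqrt (∑ i, (x t i) ^ 2) ≤ 1)
    (V : ℕ → Matrix (Fin d) (Fin d) ℝ)
    (hV : ∀ t, V t = lam • (1 : Matrix (Fin d) (Fin d) ℝ) +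
      ∑ s ∈ Finset.Icc 1 t, vecMulVec (x s) (x s)) :
    (V T).det ≤ (((d : ℝ) * lam + T) / d) ^ d ∧
      Real.log ((V T).det / (lam • (1 : Matrix (Fin d) (Fin d) ℝ)).det) ≤
        d * Real.log (1 + T / (lam * d)) := by
  have hpd : (V T).PosDef := hV T ▸ posDef_smul_one_add_sum_vecMulVec _ x hlam
  have htrace : (V T).trace ≤ d * lam + T := by
    have hnormSq (t) (ht : t ∈ Icc 1 T) : ∑ i, x t i ^ 2 ≤ 1 := by
      simpa using (Real.sqrt_le_left zero_le_one).mp (hx t ht)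
    simpa [hV] using trace_smul_one_add_sum_vecMulVec_le _ x lam hnormSq
  have hdet : (V T).det ≤ ((d * lam + T) / d) ^ d := by
    calc (V T).det ≤ ((V T).trace / d) ^ d := by
          simpa using hpd.posSemidef.det_le_trace_div_card_pow
      _ ≤ ((d * lam + T) / d) ^ d := by
          gcongr
          exact div_nonneg hpd.posSemidef.trace_nonneg d.cast_nonneg
  refine ⟨hdet, ?_⟩
  rw [det_smul, det_one, mul_one, Fintype.card_fin]
  exact Real.log_div_pow_le_mul_log hpd.det_pos hlam hdet

/-- if `‖x_t‖₂ ≤ 1` for all `t`, then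
`det(V_T) ≤ ((dλ + T)/d)^d` and `log(det(V_T)/det(λ I)) ≤ d log(1 + T/(λ d))`. -/
theorem det_upper_bound (d T : ℕ) (hd : 0 < d) (hT : 0 < T)
    (lam : ℝ) (hlam : 0 < lam) (x : ℕ → Fin d → ℝ)
    (hx : ∀ t ∈ Finset.Icc 1 T, Real.sqrt (∑ i, (x t i) ^ 2) ≤ 1)
    (V : ℕ → Matrix (Fin d) (Fin d) ℝ)
    (hV : ∀ t, V t = lam • (1 : Matrix (Fin d) (Fin d) ℝ) +
      ∑ s ∈ Finset.Icc 1 t, vecMulVec (x s) (x s)) :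
    (V T).det ≤ (((d : ℝ) * lam + T) / d) ^ d ∧
      Real.log ((V T).det / (lam • (1 : Matrix (Fin d) (Fin d) ℝ)).det) ≤
        d * Real.log (1 + T / (lam * d)) :=
  det_upper_bound_general d T lam hlam x hx V hV
end

section
/- (Instantaneous efficacy bound.) Let V be a positive definite d×d real matrix, r ≥ 0, and let θ̂, θ*, θ̃, x, x* ∈ ℝ^d satisfy ‖θ* − θ̂‖_V ≤ r, ‖θ̃ − θ̂‖_V ≤ r, and ⟨θ̃, x⟩ ≥ ⟨θ*, x*⟩. Then ⟨θ*, x*⟩ − ⟨θ*, x⟩ ≤ 2 r ‖x‖_{V^{-1}}. -/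
/-! Both `θ*` and `θ̃` lie in the `V`-ball of radius `r` about `θ̂`, so `‖θ̃ - θ*‖_V ≤ 2r`.
Optimism bounds the regret by `⟨θ̃ - θ*, x⟩`, and Cauchy–Schwarz for the form `V`, applied to
`θ̃ - θ*` and `V⁻¹ x`, bounds this by `‖θ̃ - θ*‖_V ‖x‖_{V⁻¹}`. -/

open Matrix

namespace Matrix

variable {d : ℕ} {V : Matrix (Fin d) (Fin d) ℝ}

lemma matNorm_nonneg (V : Matrix (Fin d) (Fin d) ℝ) (z : Fin d → ℝ) : 0 ≤ matNorm V z :=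
  Real.sqrt_nonneg _

lemma matNorm_sub_comm (V : Matrix (Fin d) (Fin d) ℝ) (a b : Fin d → ℝ) :
    matNorm V (a - b) = matNorm V (b - a) := by
  rw [← neg_sub b a, matNorm, matNorm, mulVec_neg, neg_dotProduct, dotProduct_neg, neg_neg]

lemma PosSemidef.dotProduct_mulVec_self_nonneg (hV : V.PosSemidef) (z : Fin d → ℝ) :
    0 ≤ z ⬝ᵥ (V *ᵥ z) := by
  simpa using hV.dotProduct_mulVec_nonneg z

lemma PosSemidef.matNorm_sq (hV : V.PosSemidef) (z : Fin d → ℝ) :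
    matNorm V z ^ 2 = z ⬝ᵥ (V *ᵥ z) :=
  Real.sq_sqrt (hV.dotProduct_mulVec_self_nonneg z)

lemma PosSemidef.dotProduct_mulVec_comm (hV : V.PosSemidef) (u w : Fin d → ℝ) :
    u ⬝ᵥ (V *ᵥ w) = w ⬝ᵥ (V *ᵥ u) := by
  rw [dotProduct_mulVec, ← mulVec_transpose, (isHermitian_iff_isSymm.mp hV.isHermitian).eq,
    dotProduct_comm]

lemma PosSemidef.dotProduct_mulVec_le_matNorm_mul_matNorm (hV : V.PosSemidef)
    (u w : Fin d → ℝ) : u ⬝ᵥ (V *ᵥ w) ≤ matNorm V u * matNorm V w := by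
  have cauchySchwarz : (u ⬝ᵥ (V *ᵥ w)) ^ 2 ≤ (u ⬝ᵥ (V *ᵥ u)) * (w ⬝ᵥ (V *ᵥ w)) := by
    simpa only [toBilin'_apply'] using (toBilin' V).apply_sq_le_of_symm
      (by simpa only [toBilin'_apply'] using hV.dotProduct_mulVec_self_nonneg)
      (LinearMap.BilinForm.isSymm_iff.mp
        (isSymm_toBilin'_iff_isSymm.mpr (isHermitian_iff_isSymm.mp hV.isHermitian))) u w
  rw [matNorm, matNorm, ← Real.sqrt_mul (hV.dotProduct_mulVec_self_nonneg u)]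
  exact Real.le_sqrt_of_sq_le cauchySchwarz

lemma PosSemidef.matNorm_add_le (hV : V.PosSemidef) (u w : Fin d → ℝ) :
    matNorm V (u + w) ≤ matNorm V u + matNorm V w := by
  rw [matNorm, Real.sqrt_le_left (add_nonneg (matNorm_nonneg V u) (matNorm_nonneg V w))]
  calc (u + w) ⬝ᵥ (V *ᵥ (u + w))
      = u ⬝ᵥ (V *ᵥ u) + 2 * (u ⬝ᵥ (V *ᵥ w)) + w ⬝ᵥ (V *ᵥ w) := by
        simp only [mulVec_add, dotProduct_add, add_dotProduct, hV.dotProduct_mulVec_comm w u]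
        ring
    _ ≤ matNorm V u ^ 2 + 2 * (matNorm V u * matNorm V w) + matNorm V w ^ 2 := by
        rw [hV.matNorm_sq, hV.matNorm_sq]
        gcongr
        exact hV.dotProduct_mulVec_le_matNorm_mul_matNorm u w
    _ = (matNorm V u + matNorm V w) ^ 2 := by ring

lemma PosSemidef.matNorm_sub_le_add (hV : V.PosSemidef) (a b c : Fin d → ℝ) :
    matNorm V (a - c) ≤ matNorm V (a - b) + matNorm V (b - c) := by
  simpa only [sub_add_sub_cancel] using hV.matNorm_add_le (a - b) (b - c)

lemma PosDef.mulVec_inv_mulVec (hV : V.PosDef) (x : Fin d → ℝ) : V *ᵥ (V⁻¹ *ᵥ x) = x := by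
  rw [mulVec_mulVec, mul_nonsing_inv V ((isUnit_iff_isUnit_det V).mp hV.isUnit), one_mulVec]

lemma PosDef.matNorm_inv_eq (hV : V.PosDef) (x : Fin d → ℝ) :
    matNorm V⁻¹ x = matNorm V (V⁻¹ *ᵥ x) := by
  rw [matNorm, matNorm, hV.mulVec_inv_mulVec, dotProduct_comm]

lemma PosDef.dotProduct_le_matNorm_mul_matNorm_inv (hV : V.PosDef) (u x : Fin d → ℝ) :
    u ⬝ᵥ x ≤ matNorm V u * matNorm V⁻¹ x := by
  have := hV.posSemidef.dotProduct_mulVec_le_matNorm_mul_matNorm u (V⁻¹ *ᵥ x)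
  rwa [hV.mulVec_inv_mulVec, ← hV.matNorm_inv_eq] at this

end Matrix

theorem instantaneous_efficacy_bound_general (d : ℕ)
    (V : Matrix (Fin d) (Fin d) ℝ) (hV : V.PosDef) (r : ℝ)
    (θhat θstar θtilde x xstar : Fin d → ℝ)
    (h1 : matNorm V (θstar - θhat) ≤ r)
    (h2 : matNorm V (θtilde - θhat) ≤ r)
    (h3 : θstar ⬝ᵥ xstar ≤ θtilde ⬝ᵥ x) :
    θstar ⬝ᵥ xstar - θstar ⬝ᵥ x ≤ 2 * r * matNorm V⁻¹ x := by
  have confidence : matNorm V (θtilde - θstar) ≤ 2 * r := by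
    have := hV.posSemidef.matNorm_sub_le_add θtilde θhat θstar
    rw [matNorm_sub_comm V θhat] at this
    linarith
  calc θstar ⬝ᵥ xstar - θstar ⬝ᵥ x ≤ (θtilde - θstar) ⬝ᵥ x := by
        rw [sub_dotProduct]
        linarith
    _ ≤ matNorm V (θtilde - θstar) * matNorm V⁻¹ x :=
        hV.dotProduct_le_matNorm_mul_matNorm_inv _ x
    _ ≤ 2 * r * matNorm V⁻¹ x :=
        mul_le_mul_of_nonneg_right confidence (matNorm_nonneg _ x)

/-- instantaneous efficacy bound: if `‖θ* − θ̂‖_V ≤ r`, `‖θ̃ − θ̂‖_V ≤ r`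
and `⟨θ̃, x⟩ ≥ ⟨θ*, x*⟩`, then `⟨θ*, x*⟩ − ⟨θ*, x⟩ ≤ 2 r ‖x‖_{V⁻¹}`. -/
theorem instantaneous_efficacy_bound (d : ℕ)
    (V : Matrix (Fin d) (Fin d) ℝ) (hV : V.PosDef) (r : ℝ) (hr : 0 ≤ r)
    (θhat θstar θtilde x xstar : Fin d → ℝ)
    (h1 : matNorm V (θstar - θhat) ≤ r)
    (h2 : matNorm V (θtilde - θhat) ≤ r)
    (h3 : θstar ⬝ᵥ xstar ≤ θtilde ⬝ᵥ x) :
    θstar ⬝ᵥ xstar - θstar ⬝ᵥ x ≤ 2 * r * matNorm V⁻¹ x :=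
  instantaneous_efficacy_bound_general d V hV r θhat θstar θtilde x xstar h1 h2 h3
end

section
/- (Instantaneous safety bound.) Let V be a positive definite d×d real matrix, r ≥ 0, α ∈ ℝ, and let â, a, ã, x ∈ ℝ^d satisfy ‖a − â‖_V ≤ r, ‖ã − â‖_V ≤ r, and ⟨ã, x⟩ ≤ α. Then ⟨a, x⟩ − α ≤ 2 r ‖x‖_{V^{-1}}. -/
/-!
Shifting `a` to the feasible `ã` costs `⟨a - ã, x⟩`, and the dual Cauchy–Schwarz inequality
`⟨u, x⟩ ≤ ‖u‖_V ‖x‖_{V⁻¹}` (Cauchy–Schwarz for `‖·‖_V` applied to `u` and `V⁻¹ x`) bounds this by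
`‖a - ã‖_V ‖x‖_{V⁻¹}`; the triangle inequality through `â` gives `‖a - ã‖_V ≤ 2r`.
-/

open Matrix

namespace Matrix.PosSemidef

variable {d : ℕ} {W : Matrix (Fin d) (Fin d) ℝ}

/- `Fin d → ℝ` already carries the sup norm, so the norm of the inner product space
`W.toInnerProductSpace hW` has to be named explicitly. -/
theorem matNorm_eq_norm (hW : W.PosSemidef) (z : Fin d → ℝ) :
    matNorm W z = @norm _ (W.toSeminormedAddCommGroup hW).toNorm z := by
  rw [matNorm, dotProduct_comm]
  rfl

theorem dotProduct_mulVec_le_matNorm_mul_matNorm_s5 (hW : W.PosSemidef) (u v : Fin d → ℝ) :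
    u ⬝ᵥ (W *ᵥ v) ≤ matNorm W u * matNorm W v := by
  rw [hW.matNorm_eq_norm, hW.matNorm_eq_norm, dotProduct_comm]
  exact @real_inner_le_norm _ (W.toSeminormedAddCommGroup hW) (W.toInnerProductSpace hW) u v

theorem matNorm_sub_comm (hW : W.PosSemidef) (u v : Fin d → ℝ) :
    matNorm W (u - v) = matNorm W (v - u) := by
  simp only [hW.matNorm_eq_norm]
  exact @norm_sub_rev _ (W.toSeminormedAddCommGroup hW).toSeminormedAddGroup u v

theorem matNorm_sub_le_matNorm_sub_add_matNorm_sub (hW : W.PosSemidef) (u v w : Fin d → ℝ) :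
    matNorm W (u - w) ≤ matNorm W (u - v) + matNorm W (v - w) := by
  simp only [hW.matNorm_eq_norm]
  exact @norm_sub_le_norm_sub_add_norm_sub _
    (W.toSeminormedAddCommGroup hW).toSeminormedAddGroup u v w

end Matrix.PosSemidef

theorem Matrix.PosDef.dotProduct_le_matNorm_mul_matNorm_inv_s5 {d : ℕ}
    {V : Matrix (Fin d) (Fin d) ℝ} (hV : V.PosDef) (u x : Fin d → ℝ) :
    u ⬝ᵥ x ≤ matNorm V u * matNorm V⁻¹ x := by
  have hx : V *ᵥ (V⁻¹ *ᵥ x) = x := by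
    rw [mulVec_mulVec, mul_nonsing_inv V ((isUnit_iff_isUnit_det V).mp hV.isUnit), one_mulVec]
  have hnorm : matNorm V (V⁻¹ *ᵥ x) = matNorm V⁻¹ x := by
    rw [matNorm, matNorm, hx, dotProduct_comm, dotProduct_mulVec, ← mulVec_transpose,
      ← conjTranspose_eq_transpose_of_trivial, hV.inv.isHermitian.eq]
  calc u ⬝ᵥ x = u ⬝ᵥ (V *ᵥ (V⁻¹ *ᵥ x)) := by rw [hx]
    _ ≤ matNorm V u * matNorm V⁻¹ x :=
      hnorm ▸ hV.posSemidef.dotProduct_mulVec_le_matNorm_mul_matNorm_s5 u _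

theorem instantaneous_safety_bound_general (d : ℕ)
    (V : Matrix (Fin d) (Fin d) ℝ) (hV : V.PosDef) (r : ℝ) (α : ℝ)
    (ahat a atilde x : Fin d → ℝ)
    (h1 : matNorm V (a - ahat) ≤ r)
    (h2 : matNorm V (atilde - ahat) ≤ r)
    (h3 : atilde ⬝ᵥ x ≤ α) :
    a ⬝ᵥ x - α ≤ 2 * r * matNorm V⁻¹ x := by
  have hdist : matNorm V (a - atilde) ≤ 2 * r := by
    have := hV.posSemidef.matNorm_sub_le_matNorm_sub_add_matNorm_sub a ahat atilde
    rw [hV.posSemidef.matNorm_sub_comm ahat] at this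
    linarith
  calc a ⬝ᵥ x - α ≤ (a - atilde) ⬝ᵥ x := by rw [sub_dotProduct]; linarith
    _ ≤ matNorm V (a - atilde) * matNorm V⁻¹ x := hV.dotProduct_le_matNorm_mul_matNorm_inv_s5 _ _
    _ ≤ 2 * r * matNorm V⁻¹ x := by gcongr; exact Real.sqrt_nonneg _

/-- instantaneous safety bound: if `‖a − â‖_V ≤ r`, `‖ã − â‖_V ≤ r`
and `⟨ã, x⟩ ≤ α`, then `⟨a, x⟩ − α ≤ 2 r ‖x‖_{V⁻¹}`. -/
theorem instantaneous_safety_bound (d : ℕ)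
    (V : Matrix (Fin d) (Fin d) ℝ) (hV : V.PosDef) (r : ℝ) (hr : 0 ≤ r) (α : ℝ)
    (ahat a atilde x : Fin d → ℝ)
    (h1 : matNorm V (a - ahat) ≤ r)
    (h2 : matNorm V (atilde - ahat) ≤ r)
    (h3 : atilde ⬝ᵥ x ≤ α) :
    a ⬝ᵥ x - α ≤ 2 * r * matNorm V⁻¹ x :=
  instantaneous_safety_bound_general d V hV r α ahat a atilde x h1 h2 h3
end

section
/- (Efficiency-gap perturbation inequality.) Let A_U ∈ ℝ^{m×d}, A_K ∈ ℝ^{k×d}, A_J ∈ ℝ^{j×d}, α_U ∈ ℝ^m, α_K ∈ ℝ^k, α_J ∈ ℝ^j, θ* ∈ ℝ^d, OPT ∈ ℝ, δ ≥ 0, and ρ ≥ 0. Suppose: (i) there is x^I ∈ ℝ^d with A_U x^I = α_U, A_K x^I = α_K, A_J x^I ≤ α_J (coordinatewise), and ⟨θ*, x^I⟩ = OPT − δ; (ii) there is a dual certificate (π, μ, σ) ∈ ℝ^m × ℝ^k × ℝ^j with σ ≥ 0, A_Uᵀ π + A_Kᵀ μ + A_Jᵀ σ = θ*, and ⟨σ,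 A_J x^I − α_J⟩ = 0; (iii) there is x_t ∈ ℝ^d with A_K x_t = α_K and A_J x_t ≤ α_J; (iv) there is a matrix δA_U ∈ ℝ^{m×d} with (A_U + δA_U) x_t = α_U and ‖δA_U x_t‖_∞ ≤ ρ; (v) there is δθ ∈ ℝ^d with |⟨δθ, x_t⟩| ≤ ρ and ⟨θ* + δθ, x_t⟩ ≥ OPT. Then δ ≤ ρ (1 + ‖π‖₁). -/
open Matrix Finset

/-- efficiency-gap perturbation inequality. -/
theorem efficiency_gap_perturbation (d m k j : ℕ)
    (AU : Matrix (Fin m) (Fin d) ℝ) (AK : Matrix (Fin k) (Fin d) ℝ)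
    (AJ : Matrix (Fin j) (Fin d) ℝ)
    (αU : Fin m → ℝ) (αK : Fin k → ℝ) (αJ : Fin j → ℝ)
    (θstar : Fin d → ℝ) (OPT δ ρ : ℝ) (hδ : 0 ≤ δ) (hρ : 0 ≤ ρ)
    -- (i) primal point associated with the BIS
    (xI : Fin d → ℝ)
    (hxIU : AU *ᵥ xI = αU) (hxIK : AK *ᵥ xI = αK)
    (hxIJ : ∀ i, (AJ *ᵥ xI) i ≤ αJ i)
    (hxIval : θstar ⬝ᵥ xI = OPT - δ)
    -- (ii) dual certificate with complementary slackness
    (piv : Fin m → ℝ) (muv : Fin k → ℝ) (sigv : Fin j → ℝ)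
    (hsig : ∀ i, 0 ≤ sigv i)
    (hdual : AUᵀ *ᵥ piv + AKᵀ *ᵥ muv + AJᵀ *ᵥ sigv = θstar)
    (hcs : sigv ⬝ᵥ (AJ *ᵥ xI - αJ) = 0)
    -- (iii) the played point satisfies the known constraints
    (xt : Fin d → ℝ) (hxtK : AK *ᵥ xt = αK) (hxtJ : ∀ i, (AJ *ᵥ xt) i ≤ αJ i)
    -- (iv) perturbed unknown constraints met with equality
    (δAU : Matrix (Fin m) (Fin d) ℝ) (hδAU : (AU + δAU) *ᵥ xt = αU)
    (hδAUbound : ∀ i, |(δAU *ᵥ xt) i| ≤ ρ)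
    -- (v) perturbed objective dominates OPT
    (δθ : Fin d → ℝ) (hδθ : |δθ ⬝ᵥ xt| ≤ ρ)
    (hopt : OPT ≤ (θstar + δθ) ⬝ᵥ xt) :
    δ ≤ ρ * (1 + ∑ i, |piv i|) := by
  have key : ∀ v : Fin d → ℝ, θstar ⬝ᵥ v
      = piv ⬝ᵥ (AU *ᵥ v) + muv ⬝ᵥ (AK *ᵥ v) + sigv ⬝ᵥ (AJ *ᵥ v) := by
    intro v
    rw [← hdual]
    simp [add_dotProduct, Matrix.dotProduct_mulVec, Matrix.mulVec_transpose]
  have hcs' : sigv ⬝ᵥ (AJ *ᵥ xI) = sigv ⬝ᵥ αJ := by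
    have := hcs
    rw [dotProduct_sub] at this
    linarith
  have eq1 : OPT - δ = piv ⬝ᵥ αU + muv ⬝ᵥ αK + sigv ⬝ᵥ αJ := by
    rw [← hxIval, key xI, hxIU, hxIK, hcs']
  have hsigle : sigv ⬝ᵥ (AJ *ᵥ xt) ≤ sigv ⬝ᵥ αJ := by
    apply Finset.sum_le_sum
    intro i _
    exact mul_le_mul_of_nonneg_left (hxtJ i) (hsig i)
  have hAUxt : AU *ᵥ xt = αU - δAU *ᵥ xt := by
    rw [← hδAU, Matrix.add_mulVec]; ext i; simp
  have habs : |piv ⬝ᵥ (δAU *ᵥ xt)| ≤ ρ * ∑ i, |piv i| := by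
    calc |piv ⬝ᵥ (δAU *ᵥ xt)| ≤ ∑ i, |piv i * (δAU *ᵥ xt) i| :=
          Finset.abs_sum_le_sum_abs _ _
      _ ≤ ∑ i, |piv i| * ρ := by
          apply Finset.sum_le_sum
          intro i _
          rw [abs_mul]
          exact mul_le_mul_of_nonneg_left (hδAUbound i) (abs_nonneg _)
      _ = ρ * ∑ i, |piv i| := by rw [← Finset.sum_mul, mul_comm]
  have hθxt : θstar ⬝ᵥ xt ≤ OPT - δ - piv ⬝ᵥ (δAU *ᵥ xt) := by
    rw [key xt, hAUxt, hxtK, dotProduct_sub, eq1]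
    linarith
  have hδθ' : δθ ⬝ᵥ xt ≤ ρ := (abs_le.mp hδθ).2
  have hpiv : -(ρ * ∑ i, |piv i|) ≤ piv ⬝ᵥ (δAU *ᵥ xt) := (abs_le.mp habs).1
  rw [add_dotProduct] at hopt
  linarith
end

section
/- (Feasibility-gap perturbation inequality.) Let A_U ∈ ℝ^{m×d}, A_K ∈ ℝ^{k×d}, A_J ∈ ℝ^{j×d}, α_U ∈ ℝ^m, α_K ∈ ℝ^k, α_J ∈ ℝ^j, a^k ∈ ℝ^d, α^k ∈ ℝ, γ ≥ 0, and ρ ≥ 0. Suppose: (i) there is x^I ∈ ℝ^d with A_U x^I = α_U, A_K x^I = α_K, A_J x^I ≤ α_J (coordinatewise), and ⟨a^k, x^I⟩ = α^k + γ; (ii) there is a dual certificate (π, μ, σ) ∈ ℝ^m × ℝ^k × ℝ^j with σ ≥ 0, A_Uᵀ π + A_Kᵀ μ + A_Jᵀ σ = −a^k, and ⟨σ, A_J x^I − α_J⟩ = 0; (iii) there is x_t ∈ ℝ^d with A_K x_t = α_K and A_J x_t ≤ α_J; (iv) there is δA_U ∈ ℝ^{m×d} with (A_U + δA_U) x_t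 = α_U and ‖δA_U x_t‖_∞ ≤ ρ; (v) there is δa ∈ ℝ^d with |⟨δa, x_t⟩| ≤ ρ and ⟨a^k + δa, x_t⟩ ≤ α^k. Then γ ≤ ρ (1 + ‖π‖₁). -/
open Matrix Finset

/-- feasibility-gap perturbation inequality. -/
theorem feasibility_gap_perturbation (d m k j : ℕ)
    (AU : Matrix (Fin m) (Fin d) ℝ) (AK : Matrix (Fin k) (Fin d) ℝ)
    (AJ : Matrix (Fin j) (Fin d) ℝ)
    (αU : Fin m → ℝ) (αK : Fin k → ℝ) (αJ : Fin j → ℝ)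
    (ak : Fin d → ℝ) (αk : ℝ) (γ ρ : ℝ) (hγ : 0 ≤ γ) (hρ : 0 ≤ ρ)
    -- (i) primal point associated with the BIS, violating constraint k by γ
    (xI : Fin d → ℝ)
    (hxIU : AU *ᵥ xI = αU) (hxIK : AK *ᵥ xI = αK)
    (hxIJ : ∀ i, (AJ *ᵥ xI) i ≤ αJ i)
    (hxIval : ak ⬝ᵥ xI = αk + γ)
    -- (ii) dual certificate with complementary slackness
    (piv : Fin m → ℝ) (muv : Fin k → ℝ) (sigv : Fin j → ℝ)
    (hsig : ∀ i, 0 ≤ sigv i)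
    (hdual : AUᵀ *ᵥ piv + AKᵀ *ᵥ muv + AJᵀ *ᵥ sigv = -ak)
    (hcs : sigv ⬝ᵥ (AJ *ᵥ xI - αJ) = 0)
    -- (iii) the played point satisfies the known constraints
    (xt : Fin d → ℝ) (hxtK : AK *ᵥ xt = αK) (hxtJ : ∀ i, (AJ *ᵥ xt) i ≤ αJ i)
    -- (iv) perturbed unknown constraints met with equality
    (δAU : Matrix (Fin m) (Fin d) ℝ) (hδAU : (AU + δAU) *ᵥ xt = αU)
    (hδAUbound : ∀ i, |(δAU *ᵥ xt) i| ≤ ρ)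
    -- (v) a perturbed version of constraint k is satisfied at x_t
    (δa : Fin d → ℝ) (hδa : |δa ⬝ᵥ xt| ≤ ρ)
    (hperm : (ak + δa) ⬝ᵥ xt ≤ αk) :
    γ ≤ ρ * (1 + ∑ i, |piv i|) := by
  have key : ∀ x : Fin d → ℝ,
      piv ⬝ᵥ (AU *ᵥ x) + muv ⬝ᵥ (AK *ᵥ x) + sigv ⬝ᵥ (AJ *ᵥ x) = -(ak ⬝ᵥ x) := by
    intro x
    have h := congrArg (fun v => v ⬝ᵥ x) hdual
    simpa [add_dotProduct, neg_dotProduct, Matrix.mulVec_transpose,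
      Matrix.dotProduct_mulVec] using h
  -- at xI
  have hcs' : sigv ⬝ᵥ (AJ *ᵥ xI) = sigv ⬝ᵥ αJ := by
    have := hcs
    rw [dotProduct_sub] at this
    linarith
  have E1 : piv ⬝ᵥ αU + muv ⬝ᵥ αK + sigv ⬝ᵥ αJ = -(αk + γ) := by
    have := key xI
    rw [hxIU, hxIK, hcs', hxIval] at this
    exact this
  -- at xt
  have hAUxt : AU *ᵥ xt = αU - δAU *ᵥ xt := by
    rw [Matrix.add_mulVec] at hδAU
    funext i
    have := congrFun hδAU i
    simp only [Pi.add_apply, Pi.sub_apply] at *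
    linarith
  have E2 : piv ⬝ᵥ αU - piv ⬝ᵥ (δAU *ᵥ xt) + muv ⬝ᵥ αK + sigv ⬝ᵥ (AJ *ᵥ xt)
      = -(ak ⬝ᵥ xt) := by
    have := key xt
    rw [hAUxt, hxtK, dotProduct_sub] at this
    linarith
  have hsigle : sigv ⬝ᵥ (AJ *ᵥ xt) ≤ sigv ⬝ᵥ αJ := by
    apply Finset.sum_le_sum
    intro i _
    exact mul_le_mul_of_nonneg_left (hxtJ i) (hsig i)
  have hak : ak ⬝ᵥ xt ≤ αk + ρ := by
    rw [add_dotProduct] at hperm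
    have := abs_le.mp hδa
    linarith [this.1]
  have hpd : |piv ⬝ᵥ (δAU *ᵥ xt)| ≤ ρ * ∑ i, |piv i| := by
    calc |piv ⬝ᵥ (δAU *ᵥ xt)| ≤ ∑ i, |piv i * (δAU *ᵥ xt) i| := by
          exact Finset.abs_sum_le_sum_abs _ _
      _ ≤ ∑ i, |piv i| * ρ := by
          apply Finset.sum_le_sum
          intro i _
          rw [abs_mul]
          exact mul_le_mul_of_nonneg_left (hδAUbound i) (abs_nonneg _)
      _ = ρ * ∑ i, |piv i| := by rw [← Finset.sum_mul]; ring
  have := abs_le.mp hpd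
  linarith [this.1, this.2]
end

section
/- (Inner consistency-gap perturbation inequality.) Let A_U ∈ ℝ^{m×d}, A_K ∈ ℝ^{k×d}, A_J ∈ ℝ^{j×d}, α_U ∈ ℝ^m, α_K ∈ ℝ^k, α_J ∈ ℝ^j, a^k ∈ ℝ^d, α^k ∈ ℝ, λ̲ ≥ 0, and ρ ≥ 0. Suppose: (i) there is x^0 ∈ ℝ^d with A_U x^0 = α_U, A_K x^0 = α_K, A_J x^0 ≤ α_J (coordinatewise), and ⟨a^k, x^0⟩ = α^k − λ̲; (ii) there is a dual certificate (π, μ, σ) ∈ ℝ^m × ℝ^k × ℝ^j with σ ≥ 0, A_Uᵀ π + A_Kᵀ μ + A_Jᵀ σ = a^k, and ⟨σ, A_J x^0 − α_J⟩ = 0; (iii) there is x_t ∈ ℝ^d with A_K x_t = α_K and A_J x_t ≤ α_J; (iv) there is δA_U ∈ ℝ^{m×d} with (A_U + δA_U) x_t = α_U and ‖δA_U x_t‖_∞ ≤ ρ; (v) there is δa ∈ ℝ^d with |⟨δa, x_t⟩| ≤ ρ and ⟨a^k + δa, x_t⟩ ≥ α^k. Then λ̲ ≤ ρ (1 + ‖π‖₁).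 -/
open Matrix Finset

/-- inner consistency-gap perturbation inequality. -/
theorem inner_consistency_gap_perturbation (d m k j : ℕ)
    (AU : Matrix (Fin m) (Fin d) ℝ) (AK : Matrix (Fin k) (Fin d) ℝ)
    (AJ : Matrix (Fin j) (Fin d) ℝ)
    (αU : Fin m → ℝ) (αK : Fin k → ℝ) (αJ : Fin j → ℝ)
    (ak : Fin d → ℝ) (αk : ℝ) (lamLow ρ : ℝ) (hlam : 0 ≤ lamLow) (hρ : 0 ≤ ρ)
    -- (i) primal point, undershooting level αk by lamLow
    (x0 : Fin d → ℝ)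
    (hx0U : AU *ᵥ x0 = αU) (hx0K : AK *ᵥ x0 = αK)
    (hx0J : ∀ i, (AJ *ᵥ x0) i ≤ αJ i)
    (hx0val : ak ⬝ᵥ x0 = αk - lamLow)
    -- (ii) dual certificate with complementary slackness
    (piv : Fin m → ℝ) (muv : Fin k → ℝ) (sigv : Fin j → ℝ)
    (hsig : ∀ i, 0 ≤ sigv i)
    (hdual : AUᵀ *ᵥ piv + AKᵀ *ᵥ muv + AJᵀ *ᵥ sigv = ak)
    (hcs : sigv ⬝ᵥ (AJ *ᵥ x0 - αJ) = 0)
    -- (iii) the played point satisfies the known constraints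
    (xt : Fin d → ℝ) (hxtK : AK *ᵥ xt = αK) (hxtJ : ∀ i, (AJ *ᵥ xt) i ≤ αJ i)
    -- (iv) perturbed unknown constraints met with equality
    (δAU : Matrix (Fin m) (Fin d) ℝ) (hδAU : (AU + δAU) *ᵥ xt = αU)
    (hδAUbound : ∀ i, |(δAU *ᵥ xt) i| ≤ ρ)
    -- (v) a perturbed version of constraint k is (reverse-)active at x_t
    (δa : Fin d → ℝ) (hδa : |δa ⬝ᵥ xt| ≤ ρ)
    (hperm : αk ≤ (ak + δa) ⬝ᵥ xt) :
    lamLow ≤ ρ * (1 + ∑ i, |piv i|) := by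

  have hAU : AU *ᵥ xt = αU - δAU *ᵥ xt := by
    rw [Matrix.add_mulVec] at hδAU
    exact eq_sub_of_add_eq hδAU
  have key : ak ⬝ᵥ (xt - x0) =
      piv ⬝ᵥ (AU *ᵥ xt - αU) + sigv ⬝ᵥ (AJ *ᵥ xt - αJ) := by
    have h1 : ak ⬝ᵥ (xt - x0)
        = piv ⬝ᵥ (AU *ᵥ (xt - x0)) + muv ⬝ᵥ (AK *ᵥ (xt - x0))
          + sigv ⬝ᵥ (AJ *ᵥ (xt - x0)) := by
      rw [← hdual]
      simp [add_dotProduct, Matrix.mulVec_transpose, ← Matrix.dotProduct_mulVec,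
        Matrix.dotProduct_mulVec]
      ring
    rw [h1, Matrix.mulVec_sub, Matrix.mulVec_sub, Matrix.mulVec_sub, hx0U, hx0K, hxtK]
    have h2 : sigv ⬝ᵥ (AJ *ᵥ xt - AJ *ᵥ x0)
        = sigv ⬝ᵥ (AJ *ᵥ xt - αJ) - sigv ⬝ᵥ (AJ *ᵥ x0 - αJ) := by
      simp [dotProduct_sub, dotProduct]
      ring_nf
      rw [← Finset.sum_sub_distrib]
      congr 1; funext i; ring
    rw [h2, hcs]
    simp
  have hb1 : piv ⬝ᵥ (AU *ᵥ xt - αU) ≤ ∑ i, |piv i| * ρ := by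
    have : AU *ᵥ xt - αU = -(δAU *ᵥ xt) := by rw [hAU]; abel
    rw [this]
    calc piv ⬝ᵥ (-(δAU *ᵥ xt)) ≤ |piv ⬝ᵥ (-(δAU *ᵥ xt))| := le_abs_self _
    _ ≤ ∑ i, |piv i * (-(δAU *ᵥ xt)) i| := by
        exact Finset.abs_sum_le_sum_abs _ _
    _ ≤ ∑ i, |piv i| * ρ := by
        apply Finset.sum_le_sum
        intro i _
        rw [abs_mul]
        apply mul_le_mul_of_nonneg_left _ (abs_nonneg _)
        simpa using hδAUbound i
  have hb2 : sigv ⬝ᵥ (AJ *ᵥ xt - αJ) ≤ 0 := by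
    apply Finset.sum_nonpos
    intro i _
    exact mul_nonpos_of_nonneg_of_nonpos (hsig i) (by simpa using sub_nonpos.2 (hxtJ i))
  have hsub : ak ⬝ᵥ (xt - x0) = ak ⬝ᵥ xt - ak ⬝ᵥ x0 := dotProduct_sub _ _ _
  rw [add_dotProduct] at hperm
  have hδa' : δa ⬝ᵥ xt ≤ ρ := le_of_abs_le hδa
  have hsum : ρ * (1 + ∑ i, |piv i|) = ρ + ∑ i, |piv i| * ρ := by
    rw [← Finset.sum_mul]; ring
  rw [hsum]
  linarith [key, hb1, hb2]
end
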